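/- arXiv:math/0403242 — 2 statements merged into one kernel-verified Lean document; each statement's English description precedes it below -/
import Mathlib

section
/- For every integer p with 1 ≤ p ≤ n, the space Hom(V, Λ^pV) ≅ V*⊗Λ^pV is the internal direct sum of the three subspaces A := {X ↦ X⌟β : β ∈ Λ^{p+1}V}, B := {X ↦ X∧γ : γ ∈ Λ^{p−1}V}, and 𝒯^{p,1} := {α : V → Λ^pV linear with Σ_i e_i∧α(e_i) = 0 and Σ_i e_i⌟α(e_i) = 0}; that is, these three subspaces are linearly independent and span Hom(V, Λ^pV). -/
/-!
Statement 1: for `1 ≤ p ≤ n`, `Hom(V, Λ^pV) ≅ V*⊗Λ^pV` is the internal direct sum of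
`A = {X ↦ X⌟β : β ∈ Λ^{p+1}V}`, `B = {X ↦ X∧γ : γ ∈ Λ^{p-1}V}` and the twistor space
`𝒯^{p,1}`.
-/

open ExteriorAlgebra

variable {V : Type*} [NormedAddCommGroup V] [InnerProductSpace ℝ V]

/-- Exterior multiplication by the vector `X` on the exterior algebra `ΛV`. -/
noncomputable def wedgeOp (X : V) : ExteriorAlgebra ℝ V →ₗ[ℝ] ExteriorAlgebra ℝ V :=
  LinearMap.mulLeft ℝ (ExteriorAlgebra.ι ℝ X)

/-- Interior product (contraction) with the vector `X` on the exterior algebra `ΛV`,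
the adjoint of `wedgeOp X` with respect to the inner product. -/
noncomputable def contractOp (X : V) : ExteriorAlgebra ℝ V →ₗ[ℝ] ExteriorAlgebra ℝ V :=
  CliffordAlgebra.contractLeft (innerₗ V X)

/-- `β ↦ (X ↦ X⌟β)` as a linear map `ΛV →ₗ Hom(V, ΛV)`. -/
noncomputable def contractHom : ExteriorAlgebra ℝ V →ₗ[ℝ] (V →ₗ[ℝ] ExteriorAlgebra ℝ V) :=
  (CliffordAlgebra.contractLeft.comp (innerₗ V)).flip

/-- `γ ↦ (X ↦ X∧γ)` as a linear map `ΛV →ₗ Hom(V, ΛV)`. -/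
noncomputable def wedgeHom : ExteriorAlgebra ℝ V →ₗ[ℝ] (V →ₗ[ℝ] ExteriorAlgebra ℝ V) :=
  ((LinearMap.mul ℝ (ExteriorAlgebra ℝ V)).comp (ExteriorAlgebra.ι ℝ)).flip

/-- The subspace of `Hom(V, ΛV)` of maps taking values in `Λ^pV`;
it is identified with `Hom(V, Λ^pV) ≅ V*⊗Λ^pV`. -/
noncomputable def homIntoPower (p : ℕ) : Submodule ℝ (V →ₗ[ℝ] ExteriorAlgebra ℝ V) :=
  ⨅ X : V, (⋀[ℝ]^p V).comap (LinearMap.applyₗ X)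

/-- The subspace `A = {X ↦ X⌟β : β ∈ Λ^{p+1}V}` of `Hom(V, Λ^pV)`. -/
noncomputable def subA (p : ℕ) : Submodule ℝ (V →ₗ[ℝ] ExteriorAlgebra ℝ V) :=
  (⋀[ℝ]^(p + 1) V).map contractHom

/-- The subspace `B = {X ↦ X∧γ : γ ∈ Λ^{p-1}V}` of `Hom(V, Λ^pV)`. -/
noncomputable def subB (p : ℕ) : Submodule ℝ (V →ₗ[ℝ] ExteriorAlgebra ℝ V) :=
  (⋀[ℝ]^(p - 1) V).map wedgeHom

/-- The twistor space `𝒯^{p,1}`: maps `α : V → Λ^pV` with `Σᵢ eᵢ∧α(eᵢ) = 0` and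
`Σᵢ eᵢ⌟α(eᵢ) = 0`. -/
noncomputable def subT {n : ℕ} (e : OrthonormalBasis (Fin n) ℝ V) (p : ℕ) :
    Submodule ℝ (V →ₗ[ℝ] ExteriorAlgebra ℝ V) :=
  homIntoPower p
    ⊓ LinearMap.ker (∑ i, (wedgeOp (e i)).comp (LinearMap.applyₗ (e i)))
    ⊓ LinearMap.ker (∑ i, (contractOp (e i)).comp (LinearMap.applyₗ (e i)))

/-! ### Auxiliary lemmas -/

lemma contractOp_ι_mul (X Y : V) (x : ExteriorAlgebra ℝ V) :
    contractOp X (ExteriorAlgebra.ι ℝ Y * x)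
      = (inner ℝ X Y : ℝ) • x - ExteriorAlgebra.ι ℝ Y * contractOp X x := by
  simpa [contractOp] using CliffordAlgebra.contractLeft_ι_mul (innerₗ V X) Y x

lemma wedge_mem {q : ℕ} (X : V) {γ : ExteriorAlgebra ℝ V} (hγ : γ ∈ ⋀[ℝ]^q V) :
    ExteriorAlgebra.ι ℝ X * γ ∈ ⋀[ℝ]^(q + 1) V := by
  rw [exteriorPower, pow_succ']
  exact Submodule.mul_mem_mul (LinearMap.mem_range_self _ X) hγ

lemma contract_mem {q : ℕ} (φ : Module.Dual ℝ V) {ω : ExteriorAlgebra ℝ V}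
    (hω : ω ∈ ⋀[ℝ]^q V) :
    CliffordAlgebra.contractLeft φ ω ∈ ⋀[ℝ]^(q - 1) V
      ∧ (q = 0 → CliffordAlgebra.contractLeft φ ω = 0) := by
  induction hω using Submodule.pow_induction_on_left' with
  | algebraMap r =>
      exact ⟨by simp [CliffordAlgebra.contractLeft_algebraMap], fun _ => by
        simp [CliffordAlgebra.contractLeft_algebraMap]⟩
  | add x y q hx hy ihx ihy =>
      refine ⟨?_, fun h0 => ?_⟩
      · rw [map_add]; exact add_mem ihx.1 ihy.1
      · rw [map_add, ihx.2 h0, ihy.2 h0, add_zero]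
  | mem_mul m hm q x hx ih =>
      obtain ⟨X, rfl⟩ := hm
      refine ⟨?_, by simp⟩
      rw [CliffordAlgebra.contractLeft_ι_mul]
      have h1 : φ X • x ∈ ⋀[ℝ]^(q + 1 - 1) V := by simpa using Submodule.smul_mem _ _ hx
      refine sub_mem h1 ?_
      rcases Nat.eq_zero_or_pos q with h0 | hq
      · subst h0; rw [ih.2 rfl, mul_zero]; exact zero_mem _
      · have := wedge_mem X ih.1
        rwa [Nat.sub_add_cancel hq] at this

lemma contractOp_mem {q : ℕ} (X : V) {ω : ExteriorAlgebra ℝ V} (hω : ω ∈ ⋀[ℝ]^q V) :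
    contractOp X ω ∈ ⋀[ℝ]^(q - 1) V :=
  (contract_mem (innerₗ V X) hω).1

/-- The number operator: `Σᵢ eᵢ∧(eᵢ⌟ω) = p·ω` on `Λ^pV`. -/
lemma sum_wedge_contract {n : ℕ} (e : OrthonormalBasis (Fin n) ℝ V) {p : ℕ}
    {ω : ExteriorAlgebra ℝ V} (hω : ω ∈ ⋀[ℝ]^p V) :
    ∑ i, ExteriorAlgebra.ι ℝ (e i) * contractOp (e i) ω = (p : ℝ) • ω := by
  induction hω using Submodule.pow_induction_on_left' with
  | algebraMap r =>
      simp [contractOp, CliffordAlgebra.contractLeft_algebraMap]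
  | add x y q hx hy ihx ihy =>
      simp only [map_add, mul_add, Finset.sum_add_distrib, ihx, ihy, smul_add]
  | mem_mul m hm q x hx ih =>
      obtain ⟨X, rfl⟩ := hm
      have key : ∀ j : Fin n,
          ExteriorAlgebra.ι ℝ (e j) * contractOp (e j) (ExteriorAlgebra.ι ℝ X * x)
            = (inner ℝ (e j) X : ℝ) • (ExteriorAlgebra.ι ℝ (e j) * x)
              + ExteriorAlgebra.ι ℝ X * (ExteriorAlgebra.ι ℝ (e j) * contractOp (e j) x) := by
        intro j
        rw [contractOp_ι_mul, mul_sub, mul_smul_comm, ← mul_assoc, ← mul_assoc]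
        have hswap : ExteriorAlgebra.ι ℝ (e j) * ExteriorAlgebra.ι ℝ X
            = -(ExteriorAlgebra.ι ℝ X * ExteriorAlgebra.ι ℝ (e j)) := by
          rw [eq_neg_iff_add_eq_zero]
          exact ExteriorAlgebra.ι_add_mul_swap (e j) X
        rw [hswap, neg_mul, sub_neg_eq_add]
      rw [Finset.sum_congr rfl fun j _ => key j, Finset.sum_add_distrib, ← Finset.mul_sum, ih]
      have h1 : ∑ j, (inner ℝ (e j) X : ℝ) • (ExteriorAlgebra.ι ℝ (e j) * x)
          = ExteriorAlgebra.ι ℝ X * x := by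
        calc ∑ j, (inner ℝ (e j) X : ℝ) • (ExteriorAlgebra.ι ℝ (e j) * x)
            = (∑ j, (inner ℝ (e j) X : ℝ) • ExteriorAlgebra.ι ℝ (e j)) * x := by
              rw [Finset.sum_mul]; simp [smul_mul_assoc]
          _ = ExteriorAlgebra.ι ℝ (∑ j, (inner ℝ (e j) X : ℝ) • e j) * x := by
              simp [map_sum, map_smul]
          _ = _ := by rw [e.sum_repr' X]
      rw [h1, mul_smul_comm]
      push_cast
      rw [add_smul, one_smul]
      abel

/-- The companion identity: `Σᵢ eᵢ⌟(eᵢ∧ω) = (n-q)·ω` on `Λ^qV`. -/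
lemma sum_contract_wedge {n : ℕ} (e : OrthonormalBasis (Fin n) ℝ V) {q : ℕ}
    {ω : ExteriorAlgebra ℝ V} (hω : ω ∈ ⋀[ℝ]^q V) :
    ∑ i, contractOp (e i) (ExteriorAlgebra.ι ℝ (e i) * ω)
      = ((n : ℝ) - (q : ℝ)) • ω := by
  have h1 : ∀ i : Fin n, contractOp (e i) (ExteriorAlgebra.ι ℝ (e i) * ω)
      = ω - ExteriorAlgebra.ι ℝ (e i) * contractOp (e i) ω := by
    intro i
    rw [contractOp_ι_mul]
    have : (inner ℝ (e i) (e i) : ℝ) = 1 := by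
      simpa using orthonormal_iff_ite.mp e.orthonormal i i
    rw [this, one_smul]
  rw [Finset.sum_congr rfl fun i _ => h1 i, Finset.sum_sub_distrib,
    sum_wedge_contract e hω, sub_smul]
  congr 1
  rw [Finset.sum_const, Finset.card_univ, Fintype.card_fin]
  exact (Nat.cast_smul_eq_nsmul ℝ n ω).symm

lemma mem_homIntoPower {p : ℕ} {α : V →ₗ[ℝ] ExteriorAlgebra ℝ V} :
    α ∈ homIntoPower p ↔ ∀ X : V, α X ∈ ⋀[ℝ]^p V := by
  simp [homIntoPower, Submodule.mem_iInf]

lemma contractHom_apply (β : ExteriorAlgebra ℝ V) (X : V) :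
    contractHom β X = contractOp X β := rfl

lemma wedgeHom_apply (γ : ExteriorAlgebra ℝ V) (X : V) :
    wedgeHom γ X = ExteriorAlgebra.ι ℝ X * γ := rfl

section Maps

variable {n : ℕ} (e : OrthonormalBasis (Fin n) ℝ V)

/-- `L α = Σᵢ eᵢ ∧ α(eᵢ)`. -/
lemma Lmap_apply (α : V →ₗ[ℝ] ExteriorAlgebra ℝ V) :
    (∑ i, (wedgeOp (e i)).comp (LinearMap.applyₗ (e i))) α
      = ∑ i, ExteriorAlgebra.ι ℝ (e i) * α (e i) := by
  simp [wedgeOp, LinearMap.mulLeft_apply]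

/-- `K α = Σᵢ eᵢ ⌟ α(eᵢ)`. -/
lemma Kmap_apply (α : V →ₗ[ℝ] ExteriorAlgebra ℝ V) :
    (∑ i, (contractOp (e i)).comp (LinearMap.applyₗ (e i))) α
      = ∑ i, contractOp (e i) (α (e i)) := by
  simp

lemma Lmap_contractHom {p : ℕ} {β : ExteriorAlgebra ℝ V} (hβ : β ∈ ⋀[ℝ]^(p+1) V) :
    (∑ i, (wedgeOp (e i)).comp (LinearMap.applyₗ (e i))) (contractHom β)
      = ((p : ℝ) + 1) • β := by
  rw [Lmap_apply]
  simp only [contractHom_apply]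
  have := sum_wedge_contract e hβ
  push_cast at this
  exact this

lemma Kmap_contractHom (β : ExteriorAlgebra ℝ V) :
    (∑ i, (contractOp (e i)).comp (LinearMap.applyₗ (e i))) (contractHom β) = 0 := by
  rw [Kmap_apply]
  simp only [contractHom_apply, contractOp]
  simp [CliffordAlgebra.contractLeft_contractLeft]

lemma Lmap_wedgeHom (γ : ExteriorAlgebra ℝ V) :
    (∑ i, (wedgeOp (e i)).comp (LinearMap.applyₗ (e i))) (wedgeHom γ) = 0 := by
  rw [Lmap_apply]
  simp only [wedgeHom_apply, ← mul_assoc, ExteriorAlgebra.ι_sq_zero, zero_mul]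
  simp

lemma Kmap_wedgeHom {q : ℕ} {γ : ExteriorAlgebra ℝ V} (hγ : γ ∈ ⋀[ℝ]^q V) :
    (∑ i, (contractOp (e i)).comp (LinearMap.applyₗ (e i))) (wedgeHom γ)
      = ((n : ℝ) - (q : ℝ)) • γ := by
  rw [Kmap_apply]
  simp only [wedgeHom_apply]
  exact sum_contract_wedge e hγ

end Maps

lemma contractHom_mem_homIntoPower {p : ℕ} {β : ExteriorAlgebra ℝ V}
    (hβ : β ∈ ⋀[ℝ]^(p+1) V) : contractHom β ∈ homIntoPower p := by
  rw [mem_homIntoPower]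
  intro X
  rw [contractHom_apply]
  simpa using contractOp_mem X hβ

lemma wedgeHom_mem_homIntoPower {p : ℕ} (hp : 1 ≤ p) {γ : ExteriorAlgebra ℝ V}
    (hγ : γ ∈ ⋀[ℝ]^(p-1) V) : wedgeHom γ ∈ homIntoPower p := by
  rw [mem_homIntoPower]
  intro X
  rw [wedgeHom_apply]
  have := wedge_mem X hγ
  rwa [Nat.sub_add_cancel hp] at this

theorem hom_decomposition
    [FiniteDimensional ℝ V] {n p : ℕ} (hn : Module.finrank ℝ V = n)
    (hp1 : 1 ≤ p) (hpn : p ≤ n) (e : OrthonormalBasis (Fin n) ℝ V) :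
    subA (V := V) p ⊔ subB (V := V) p ⊔ subT e p = homIntoPower p
    ∧ subA (V := V) p ⊓ (subB (V := V) p ⊔ subT e p) = ⊥
    ∧ subB (V := V) p ⊓ (subA (V := V) p ⊔ subT e p) = ⊥
    ∧ subT e p ⊓ (subA (V := V) p ⊔ subB (V := V) p) = ⊥ := by
  set L := ∑ i, (wedgeOp (e i)).comp (LinearMap.applyₗ (e i)) with hLdef
  set K := ∑ i, (contractOp (e i)).comp (LinearMap.applyₗ (e i)) with hKdef
  have hc1 : ((p : ℝ) + 1) ≠ 0 := by positivity
  have hc2 : ((n : ℝ) - ((p - 1 : ℕ) : ℝ)) ≠ 0 := by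
    have : (p - 1 : ℕ) < n := lt_of_lt_of_le (Nat.sub_lt hp1 one_pos) hpn
    have : ((p - 1 : ℕ) : ℝ) < (n : ℝ) := by exact_mod_cast this
    linarith
  -- membership facts
  have hAle : subA (V := V) p ≤ homIntoPower p := by
    rintro _ ⟨β, hβ, rfl⟩
    exact contractHom_mem_homIntoPower hβ
  have hBle : subB (V := V) p ≤ homIntoPower p := by
    rintro _ ⟨γ, hγ, rfl⟩
    exact wedgeHom_mem_homIntoPower hp1 hγ
  have hTle : subT e p ≤ homIntoPower p := fun α hα => hα.1.1
  -- L and K vanish on T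
  have hTL : ∀ α ∈ subT e p, L α = 0 := fun α hα => hα.1.2
  have hTK : ∀ α ∈ subT e p, K α = 0 := fun α hα => hα.2
  constructor
  · -- span
    apply le_antisymm
    · exact sup_le (sup_le hAle hBle) hTle
    · intro α hα
      have hαX := mem_homIntoPower.mp hα
      -- define β and γ
      set β : ExteriorAlgebra ℝ V := ((p : ℝ) + 1)⁻¹ • (L α) with hβdef
      set γ : ExteriorAlgebra ℝ V := ((n : ℝ) - ((p - 1 : ℕ) : ℝ))⁻¹ • (K α) with hγdef
      have hLα : L α ∈ ⋀[ℝ]^(p+1) V := by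
        rw [hLdef, Lmap_apply]
        exact Submodule.sum_mem _ fun i _ => wedge_mem (e i) (hαX (e i))
      have hKα : K α ∈ ⋀[ℝ]^(p-1) V := by
        rw [hKdef, Kmap_apply]
        exact Submodule.sum_mem _ fun i _ => contractOp_mem (e i) (hαX (e i))
      have hβ : β ∈ ⋀[ℝ]^(p+1) V := Submodule.smul_mem _ _ hLα
      have hγ : γ ∈ ⋀[ℝ]^(p-1) V := Submodule.smul_mem _ _ hKα
      have hLa : L (contractHom β) = L α := by
        rw [hLdef, Lmap_contractHom e hβ, hβdef, smul_smul, mul_inv_cancel₀ hc1, one_smul]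
      have hKb : K (wedgeHom γ) = K α := by
        rw [hKdef, Kmap_wedgeHom e hγ, hγdef, smul_smul, mul_inv_cancel₀ hc2, one_smul]
      have hKa : K (contractHom β) = 0 := by rw [hKdef]; exact Kmap_contractHom e β
      have hLb : L (wedgeHom γ) = 0 := by rw [hLdef]; exact Lmap_wedgeHom e γ
      set t := α - contractHom β - wedgeHom γ with htdef
      have htT : t ∈ subT e p := by
        refine ⟨⟨?_, ?_⟩, ?_⟩
        · show t ∈ homIntoPower p
          rw [mem_homIntoPower]
          intro X
          simp only [htdef, LinearMap.sub_apply]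
          exact sub_mem (sub_mem (hαX X)
            (mem_homIntoPower.mp (contractHom_mem_homIntoPower hβ) X))
            (mem_homIntoPower.mp (wedgeHom_mem_homIntoPower hp1 hγ) X)
        · show L t = 0
          rw [htdef, map_sub, map_sub, hLa, hLb, sub_zero, sub_self]
        · show K t = 0
          rw [htdef, map_sub, map_sub, hKa, hKb, sub_zero, sub_self]
      have : α = contractHom β + wedgeHom γ + t := by rw [htdef]; abel
      rw [this]
      refine add_mem (add_mem ?_ ?_) ?_
      · exact Submodule.mem_sup_left (Submodule.mem_sup_left (Submodule.mem_map_of_mem hβ))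
      · exact Submodule.mem_sup_left (Submodule.mem_sup_right (Submodule.mem_map_of_mem hγ))
      · exact Submodule.mem_sup_right htT
  refine ⟨?_, ?_, ?_⟩
  · -- A ⊓ (B ⊔ T) = ⊥
    rw [eq_bot_iff]
    rintro α ⟨hαA, hαBT⟩
    obtain ⟨β, hβ, rfl⟩ := hαA
    obtain ⟨b, hb, t, ht, hbt⟩ := Submodule.mem_sup.mp hαBT
    obtain ⟨γ, hγ, rfl⟩ := hb
    have h1 : L (contractHom β) = ((p : ℝ) + 1) • β := by
      rw [hLdef]; exact Lmap_contractHom e hβ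
    have h2 : L (contractHom β) = 0 := by
      rw [← hbt, map_add, hTL t ht, add_zero, hLdef]
      exact Lmap_wedgeHom e γ
    have hβ0 : β = 0 := by
      have := h1.symm.trans h2
      exact (smul_eq_zero.mp this).resolve_left hc1
    simp [hβ0]
  · -- B ⊓ (A ⊔ T) = ⊥
    rw [eq_bot_iff]
    rintro α ⟨hαB, hαAT⟩
    obtain ⟨γ, hγ, rfl⟩ := hαB
    obtain ⟨a, ha, t, ht, hat⟩ := Submodule.mem_sup.mp hαAT
    obtain ⟨β, hβ, rfl⟩ := ha
    have h1 : K (wedgeHom γ) = ((n : ℝ) - ((p - 1 : ℕ) : ℝ)) • γ := by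
      rw [hKdef]; exact Kmap_wedgeHom e hγ
    have h2 : K (wedgeHom γ) = 0 := by
      rw [← hat, map_add, hTK t ht, add_zero, hKdef, Kmap_contractHom e β]
    have hγ0 : γ = 0 := by
      have := h1.symm.trans h2
      exact (smul_eq_zero.mp this).resolve_left hc2
    simp [hγ0]
  · -- T ⊓ (A ⊔ B) = ⊥
    rw [eq_bot_iff]
    rintro α ⟨hαT, hαAB⟩
    obtain ⟨a, ha, b, hb, hab⟩ := Submodule.mem_sup.mp hαAB
    obtain ⟨β, hβ, rfl⟩ := ha
    obtain ⟨γ, hγ, rfl⟩ := hb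
    have hL0 : L α = 0 := hTL α hαT
    have hK0 : K α = 0 := hTK α hαT
    have h1 : L α = ((p : ℝ) + 1) • β := by
      rw [← hab, map_add, hLdef, Lmap_contractHom e hβ, Lmap_wedgeHom e γ, add_zero]
    have h2 : K α = ((n : ℝ) - ((p - 1 : ℕ) : ℝ)) • γ := by
      rw [← hab, map_add, hKdef, Kmap_contractHom e β, Kmap_wedgeHom e hγ, zero_add]
    have hβ0 : β = 0 := (smul_eq_zero.mp (h1.symm.trans hL0)).resolve_left hc1
    have hγ0 : γ = 0 := (smul_eq_zero.mp (h2.symm.trans hK0)).resolve_left hc2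
    have : α = 0 := by rw [← hab, hβ0, hγ0]; simp
    simp [this]
end

section
/- Let m ≥ 2 and p ≥ 2 be integers, and let (k, a, b) and (k′, a′, b′) be triples of nonnegative integers satisfying: b ≤ a ≤ m, 2b ≤ min(p − k, 4m − p − k), 2a ≤ min(p + k, 4m − p + k); b′ ≤ a′ ≤ m, 2b′ ≤ min(p + 1 − k′, 4m − p − 1 − k′), 2a′ ≤ min(p + 1 + k′, 4m − p − 1 + k′); |k − k′| = 1 and |a − a′| + |b − b′| = 1. Set j := −k(k+2), j′ := −k′(k′+2), c := P(k, a, b, p), c′ := P(k′, a′, b′, p+1), and suppose the system (p+1)(j+3) = (p−1)j′, (p+1)c = (p−1)c′, −2c′ + j′ + 3(p+1) = 0 holds. Then k = 1, k′ = 0, b′ = b, a′ = a − 1, 4m − p = 2a − 1, and in particular p ≥ 2m + 1. (This is the complete numerical analysis of system (sys1)–(eq1) in the proof that every Killing p-form, p ≥ 2, on a compact quaternion-Kähler manifold is parallel: every solution compatible with the constraints of Lemmas 3.1 and 3.2 falls into the single case that is excluded by the geometric argument using the Kraines form.) -/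
/-!
Statement 14: the complete numerical analysis of the system (sys1)–(eq1) in the proof
that every Killing `p`-form (`p ≥ 2`) on a compact quaternion-Kähler manifold is
parallel.
-/

/-- The eigenvalue `P(k, a, b, q)` of the operator `C` on the summand
`Sym^kH⊗Λ^{a,b}₀E` of `Λ^q`, for quaternionic dimension `m`:
`P(k, a, b, q) = ¼(q(4m − q + 6) − k(k+2) − 4b + 2a² + 2b² − 4(a+b)(m+1))`. -/
def Pval (m k a b q : ℤ) : ℚ :=
  (1 / 4 : ℚ) * ((q : ℚ) * (4 * (m : ℚ) - (q : ℚ) + 6) - (k : ℚ) * ((k : ℚ) + 2)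
    - 4 * (b : ℚ) + 2 * (a : ℚ) ^ 2 + 2 * (b : ℚ) ^ 2
    - 4 * ((a : ℚ) + (b : ℚ)) * ((m : ℚ) + 1))

/-! Cleared of denominators, the first equation involves only `k` and `k'`; with `|k - k'| = 1`
it factors as `k'(2p + 2k' + 6) = 0` or `(k + 3)(p - k) = 0`, so `(k, k') = (1, 0)` or
`(p, p + 1)`. In either case the other two equations fix `4c` and `4c'`, and comparing them
along the step `(a, b) → (a', b')` leaves only `k = 1`, `a' = a - 1`. -/

/-- The paper's `j`. -/
def Jval (k : ℤ) : ℤ :=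
  -k * (k + 2)

def fourPval (m k a b q : ℤ) : ℤ :=
  q * (4 * m - q + 6) - k * (k + 2) - 4 * b + 2 * a ^ 2 + 2 * b ^ 2 - 4 * (a + b) * (m + 1)

theorem Pval_eq_fourPval_div_four (m k a b q : ℤ) :
    Pval m k a b q = (fourPval m k a b q : ℚ) / 4 := by
  simp only [Pval, fourPval]
  push_cast
  ring

theorem eq_neighbour_of_abs_add_abs_eq_one {a b a' b' : ℤ} (h : |a - a'| + |b - b'| = 1) :
    (a' = a + 1 ∧ b' = b) ∨ (a' = a - 1 ∧ b' = b) ∨ (a' = a ∧ b' = b + 1) ∨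
      (a' = a ∧ b' = b - 1) := by
  rcases abs_cases (a - a') with ⟨ha, ha'⟩ | ⟨ha, ha'⟩ <;>
    rcases abs_cases (b - b') with ⟨hb, hb'⟩ | ⟨hb, hb'⟩ <;>
    omega

theorem J_eq_cases {p k k' : ℤ} (hp : 0 ≤ p) (hk : 0 ≤ k) (hk' : 0 ≤ k')
    (hkk' : |k - k'| = 1) (hJ : (p + 1) * (Jval k + 3) = (p - 1) * Jval k') :
    (k = 1 ∧ k' = 0) ∨ (k = p ∧ k' = p + 1) := by
  simp only [Jval] at hJ
  rcases abs_cases (k - k') with ⟨hd, hd'⟩ | ⟨hd, hd'⟩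
  · obtain rfl : k = k' + 1 := by omega
    have : k' * (2 * p + 2 * k' + 6) = 0 := by linear_combination -hJ
    rcases mul_eq_zero.mp this with h | h <;> omega
  · obtain rfl : k' = k + 1 := by omega
    have : 2 * (k + 3) * (p - k) = 0 := by linear_combination hJ
    rcases mul_eq_zero.mp this with h | h <;> omega

/-- In the case `k = p`, `k' = p + 1` (where `b = b' = 0`), the system says that
`Q(x) = x² - 2(m+1)x` takes the values `-p(2m+1)` at `a` and `-(p+1)(2m+1)` at `a' = a ± 1`,
which forces `a = 0` and then `p = 0`, or `a = 2m + 2 > m`. -/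
theorem false_of_k_eq_p {m p a a' : ℤ} (hp : 0 < p) (ha : 0 ≤ a) (ham : a ≤ m)
    (haa' : |a - a'| = 1)
    (hC : (p + 1) * fourPval m p a 0 p = (p - 1) * fourPval m (p + 1) a' 0 (p + 1))
    (hC' : fourPval m (p + 1) a' 0 (p + 1) = 2 * Jval (p + 1) + 6 * (p + 1)) : False := by
  simp only [fourPval, Jval] at hC hC'
  have hQ : 2 * (a ^ 2 - 2 * (m + 1) * a) = 2 * (-p * (2 * m + 1)) := by
    refine mul_left_cancel₀ (by omega : p + 1 ≠ 0) ?_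
    linear_combination hC + (p - 1) * hC'
  have hQ' : 2 * (a' ^ 2 - 2 * (m + 1) * a') = 2 * (-(p + 1) * (2 * m + 1)) := by
    linear_combination hC'
  rcases abs_cases (a - a') with ⟨hd, hd'⟩ | ⟨hd, hd'⟩
  · obtain rfl : a' = a - 1 := by omega
    have : 4 * a = 8 * m + 8 := by linear_combination hQ - hQ'
    omega
  · obtain rfl : a' = a + 1 := by omega
    have : 4 * a = 0 := by linear_combination hQ' - hQ
    obtain rfl : a = 0 := by omega
    have : 2 * p * (2 * m + 1) = 0 := by linear_combination hQ
    rcases mul_eq_zero.mp this with h | h <;> omega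

theorem eq_of_k_eq_one {m p a b a' b' : ℤ} (hp : 0 < p) (h2a : 2 * a ≤ p + 1)
    (h2b : 2 * b ≤ min (p - 1) (4 * m - p - 1)) (hab' : |a - a'| + |b - b'| = 1)
    (hC : (p + 1) * fourPval m 1 a b p = (p - 1) * fourPval m 0 a' b' (p + 1))
    (hC' : fourPval m 0 a' b' (p + 1) = 2 * Jval 0 + 6 * (p + 1)) :
    b' = b ∧ a' = a - 1 ∧ 4 * m - p = 2 * a - 1 := by
  simp only [Jval] at hC'
  have hc : fourPval m 1 a b p = 6 * (p - 1) := by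
    refine mul_left_cancel₀ (by omega : p + 1 ≠ 0) ?_
    linear_combination hC + (p - 1) * hC'
  simp only [fourPval] at hc hC'
  rcases eq_neighbour_of_abs_add_abs_eq_one hab' with
    ⟨rfl, rfl⟩ | ⟨rfl, rfl⟩ | ⟨rfl, rfl⟩ | ⟨rfl, rfl⟩
  · have : 4 * a = 2 * p + 6 := by linear_combination hC' - hc
    omega
  · have : 4 * a = 8 * m - 2 * p + 2 := by linear_combination hc - hC'
    exact ⟨rfl, rfl, by omega⟩
  · have : 4 * b = 2 * p + 10 := by linear_combination hC' - hc
    omega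
  · have : 4 * b = 8 * m - 2 * p + 6 := by linear_combination hc - hC'
    omega

theorem killing_form_numerical_analysis_general
    (m p k a b k' a' b' : ℤ) (hp : 2 ≤ p)
    (hk : 0 ≤ k) (ha : 0 ≤ a) (hb : 0 ≤ b)
    (hk' : 0 ≤ k') (hb' : 0 ≤ b')
    (ham : a ≤ m)
    (h2b : 2 * b ≤ min (p - k) (4 * m - p - k))
    (h2a : 2 * a ≤ min (p + k) (4 * m - p + k))
    (h2b' : 2 * b' ≤ min (p + 1 - k') (4 * m - p - 1 - k'))
    (hkk' : |k - k'| = 1) (hab' : |a - a'| + |b - b'| = 1)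
    (hsys1 : ((p : ℚ) + 1) * (-(k : ℚ) * ((k : ℚ) + 2) + 3)
        = ((p : ℚ) - 1) * (-(k' : ℚ) * ((k' : ℚ) + 2)))
    (hsys2 : ((p : ℚ) + 1) * Pval m k a b p = ((p : ℚ) - 1) * Pval m k' a' b' (p + 1))
    (hsys3 : -2 * Pval m k' a' b' (p + 1) + (-(k' : ℚ) * ((k' : ℚ) + 2))
        + 3 * ((p : ℚ) + 1) = 0) :
    k = 1 ∧ k' = 0 ∧ b' = b ∧ a' = a - 1 ∧ 4 * m - p = 2 * a - 1 ∧ 2 * m + 1 ≤ p := by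
  simp only [Pval_eq_fourPval_div_four] at hsys2 hsys3
  have hJ : (p + 1) * (Jval k + 3) = (p - 1) * Jval k' := by
    rw [← Int.cast_inj (α := ℚ)]; push_cast [Jval]; linear_combination hsys1
  have hC : (p + 1) * fourPval m k a b p = (p - 1) * fourPval m k' a' b' (p + 1) := by
    rw [← Int.cast_inj (α := ℚ)]; push_cast; linear_combination 4 * hsys2
  have hC' : fourPval m k' a' b' (p + 1) = 2 * Jval k' + 6 * (p + 1) := by
    rw [← Int.cast_inj (α := ℚ)]; push_cast [Jval]; linear_combination -2 * hsys3
  rcases J_eq_cases (by omega) hk hk' hkk' hJ with ⟨rfl, rfl⟩ | ⟨rfl, rfl⟩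
  · obtain ⟨rfl, rfl, hm⟩ := eq_of_k_eq_one (by omega) (by omega) h2b hab' hC hC'
    exact ⟨rfl, rfl, rfl, rfl, hm, by omega⟩
  · obtain rfl : b = 0 := by omega
    obtain rfl : b' = 0 := by omega
    exact (false_of_k_eq_p (by omega) ha ham (by simpa using hab') hC hC').elim

theorem killing_form_numerical_analysis
    (m p k a b k' a' b' : ℤ) (hm : 2 ≤ m) (hp : 2 ≤ p)
    (hk : 0 ≤ k) (ha : 0 ≤ a) (hb : 0 ≤ b)
    (hk' : 0 ≤ k') (ha' : 0 ≤ a') (hb' : 0 ≤ b')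
    (hba : b ≤ a) (ham : a ≤ m)
    (h2b : 2 * b ≤ min (p - k) (4 * m - p - k))
    (h2a : 2 * a ≤ min (p + k) (4 * m - p + k))
    (hba' : b' ≤ a') (ham' : a' ≤ m)
    (h2b' : 2 * b' ≤ min (p + 1 - k') (4 * m - p - 1 - k'))
    (h2a' : 2 * a' ≤ min (p + 1 + k') (4 * m - p - 1 + k'))
    (hkk' : |k - k'| = 1) (hab' : |a - a'| + |b - b'| = 1)
    (hsys1 : ((p : ℚ) + 1) * (-(k : ℚ) * ((k : ℚ) + 2) + 3)
        = ((p : ℚ) - 1) * (-(k' : ℚ) * ((k' : ℚ) + 2)))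
    (hsys2 : ((p : ℚ) + 1) * Pval m k a b p = ((p : ℚ) - 1) * Pval m k' a' b' (p + 1))
    (hsys3 : -2 * Pval m k' a' b' (p + 1) + (-(k' : ℚ) * ((k' : ℚ) + 2))
        + 3 * ((p : ℚ) + 1) = 0) :
    k = 1 ∧ k' = 0 ∧ b' = b ∧ a' = a - 1 ∧ 4 * m - p = 2 * a - 1 ∧ 2 * m + 1 ≤ p :=
  killing_form_numerical_analysis_general m p k a b k' a' b' hp hk ha hb hk' hb' ham h2b h2a h2b'
    hkk' hab' hsys1 hsys2 hsys3
end
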